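/- Let G be a simple graph with a vertex v. If the induced subgraph G \ v is permutationally representable (i.e., has a 0-11-representant that is a concatenation of permutations of its vertex set), then G is 1-11-representable. -/

import Mathlib

/-- Number of occurrences of the consecutive pattern 11 in a word,
i.e. the number of positions `i` with `u i = u (i+1)`. -/
def pattern11Count {V : Type*} [DecidableEq V] (u : List V) : ℕ :=
  (u.zip u.tail).countP (fun p => decide (p.1 = p.2))

/-- `w` is a `k`-11-representant of the simple graph `G`: every vertex occurs in `w`,
and two distinct vertices are adjacent iff the subword of `w` induced by them contains
at most `k` occurrences of the consecutive pattern 11. -/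
def IsK11Rep {V : Type*} [DecidableEq V] (G : SimpleGraph V) (k : ℕ) (w : List V) : Prop :=
  (∀ v : V, v ∈ w) ∧
  ∀ x y : V, x ≠ y →
    (G.Adj x y ↔ pattern11Count (w.filter (fun a => decide (a = x ∨ a = y))) ≤ k)

/-- A simple graph is `k`-11-representable if it has a `k`-11-representant. -/
def K11Representable {V : Type*} [DecidableEq V] (G : SimpleGraph V) (k : ℕ) : Prop :=
  ∃ w : List V, IsK11Rep G k w

/-- A graph is `t`-uniformly `k`-11-representable if it has a `k`-11-representant in which
every vertex occurs exactly `t` times. -/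
def UniformK11Rep {V : Type*} [DecidableEq V] (G : SimpleGraph V) (t k : ℕ) : Prop :=
  ∃ w : List V, IsK11Rep G k w ∧ ∀ v : V, w.count v = t

/-- The final permutation `σ(w)`: distinct letters of `w` in order of last occurrence. -/
def finalPerm {V : Type*} [DecidableEq V] (w : List V) : List V := w.dedup

/-- The initial permutation `π(w)`: distinct letters of `w` in order of first occurrence. -/
def initPerm {V : Type*} [DecidableEq V] (w : List V) : List V := (w.reverse.dedup).reverse

/-- `w` is a concatenation of (one or more) permutations of `V`, i.e. of words in which
every vertex of `V` occurs exactly once. -/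
def IsPermConcat (V : Type*) [DecidableEq V] (w : List V) : Prop :=
  ∃ ps : List (List V), ps ≠ [] ∧ (∀ p ∈ ps, ∀ v : V, p.count v = 1) ∧ w = ps.flatten

/-!
Let `w = p₁ ⋯ pₘ` be the permutational representant of `G \ v` and let `B` list the
non-neighbours of `v`. Then `B · p₁ v p₂ v ⋯ v pₘ v p₁ v ⋯ v pₘ · reverse B` is a
1-11-representant of `G`. For `x, y ≠ v` the induced subword is `b (w|xy) (w|xy) (reverse b)`
with `b` duplicate-free. If `xy` is an edge, `w|xy` alternates and has as many `x` as `y`, so its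
first and last letters differ: the square has no 11 and at most one of the two seams with `b`
creates one. Otherwise `w|xy` already contains a 11 and its square contains two. For `x` and `v`
the induced subword is `b x v x ⋯ v x (reverse b)`, where `b = x` exactly when `x` is not
adjacent to `v`, giving two 11s or none.
-/

namespace List

variable {α : Type*}

lemma nil_intercalate (Ls : List (List α)) : ([] : List α).intercalate Ls = Ls.flatten := by
  induction Ls with
  | nil => rfl
  | cons L Ls ih => cases Ls <;> simp_all

lemma filter_intercalate (p : α → Bool) (sep : List α) (Ls : List (List α)) :
    (sep.intercalate Ls).filter p = (sep.filter p).intercalate (Ls.map (filter p)) := by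
  induction Ls with
  | nil => rfl
  | cons L Ls ih => cases Ls <;> simp_all

lemma filter_eq_replicate_count [DecidableEq α] {p : α → Bool} {l : List α} {a : α}
    (h : ∀ b ∈ l, p b ↔ b = a) : l.filter p = replicate (l.count a) a := by
  rw [← filter_beq]
  exact filter_congr fun b hb => Bool.eq_iff_iff.mpr (by simpa using h b hb)

lemma count_flatten_of_forall_count_eq_one [DecidableEq α] {Ls : List (List α)} {a : α}
    (h : ∀ L ∈ Ls, L.count a = 1) : Ls.flatten.count a = Ls.length := by
  rw [count_flatten, map_congr_left h, map_const', sum_replicate, smul_eq_mul, mul_one]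

end List

section Pattern11

variable {V : Type*} [DecidableEq V]

@[simp] lemma pattern11Count_nil : pattern11Count ([] : List V) = 0 := rfl

@[simp] lemma pattern11Count_singleton (a : V) : pattern11Count [a] = 0 := rfl

lemma pattern11Count_cons_cons (a b : V) (l : List V) :
    pattern11Count (a :: b :: l) = (if a = b then 1 else 0) + pattern11Count (b :: l) := by
  simp only [pattern11Count, List.tail_cons, List.zip_cons_cons, List.countP_cons]
  by_cases h : a = b <;> simp [h, Nat.add_comm]

lemma pattern11Count_append_cons (l : List V) (a : V) (m : List V) :
    pattern11Count (l ++ a :: m) =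
      pattern11Count l + pattern11Count (a :: m) + if l.getLast? = some a then 1 else 0 := by
  induction l with
  | nil => simp
  | cons b l ih =>
    cases l with
    | nil => simp [pattern11Count_cons_cons, Nat.add_comm]
    | cons c l =>
      simp only [List.cons_append] at ih ⊢
      rw [pattern11Count_cons_cons b c (l ++ a :: m), ih, pattern11Count_cons_cons,
        List.getLast?_cons_cons]
      omega

lemma pattern11Count_add_le_append (l₁ l₂ : List V) :
    pattern11Count l₁ + pattern11Count l₂ ≤ pattern11Count (l₁ ++ l₂) := by
  cases l₂ with
  | nil => simp
  | cons a m => rw [pattern11Count_append_cons]; omega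

lemma pattern11Count_map_of_injective {W : Type*} [DecidableEq W] {f : V → W}
    (hf : Function.Injective f) (l : List V) : pattern11Count (l.map f) = pattern11Count l := by
  induction l with
  | nil => rfl
  | cons a l ih =>
    cases l with
    | nil => rfl
    | cons b l =>
      rw [List.map_cons, List.map_cons, pattern11Count_cons_cons, pattern11Count_cons_cons,
        ← List.map_cons, ih]
      simp only [hf.eq_iff]

lemma pattern11Count_eq_zero_of_nodup {l : List V} (hl : l.Nodup) : pattern11Count l = 0 := by
  induction l with
  | nil => rfl
  | cons a l ih =>
    cases l with
    | nil => rfl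
    | cons b l =>
      rw [pattern11Count_cons_cons, ih hl.of_cons, if_neg]
      rintro rfl
      simp at hl

lemma pattern11Count_sandwich {b u : List V} (hb : b.Nodup) {c s : V}
    (hc : b.getLast? = some c) (hs : u.head? = some s) :
    pattern11Count (b ++ u ++ b.reverse) =
      pattern11Count u + (if c = s then 1 else 0) + if u.getLast? = some c then 1 else 0 := by
  obtain ⟨b, rfl⟩ := List.getLast?_eq_some_iff.mp hc
  obtain ⟨u, rfl⟩ : ∃ u', u = s :: u' := by
    cases u with
    | nil => simp at hs
    | cons a u => exact ⟨u, by simpa using hs⟩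
  have hb' : pattern11Count (c :: b.reverse) = 0 :=
    pattern11Count_eq_zero_of_nodup (by simpa using List.nodup_reverse.mpr hb)
  rw [List.reverse_concat, pattern11Count_append_cons, pattern11Count_append_cons,
    pattern11Count_eq_zero_of_nodup hb, hb']
  simp

lemma pattern11Count_sandwich_sq_le_one {b u : List V} (hb : b.Nodup)
    (hu : pattern11Count u = 0) {s : V} (hs : u.head? = some s) (hlast : u.getLast? ≠ some s) :
    pattern11Count (b ++ (u ++ u) ++ b.reverse) ≤ 1 := by
  obtain ⟨u', rfl⟩ : ∃ u', u = s :: u' := List.head?_eq_some_iff.mp hs |>.imp fun _ h => h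
  have huu : pattern11Count ((s :: u') ++ s :: u') = 0 := by
    rw [pattern11Count_append_cons, hu, if_neg hlast]
  rcases hc : b.getLast? with _ | c
  · rw [List.getLast?_eq_none_iff.mp hc, List.nil_append, List.reverse_nil, List.append_nil, huu]
    exact zero_le_one
  · rw [pattern11Count_sandwich hb hc (s := s) (by simp), huu,
      List.getLast?_append_of_ne_nil _ (List.cons_ne_nil s u')]
    by_cases hcs : c = s
    · simp [hcs, hlast]
    · simp only [if_neg hcs]
      split <;> omega

lemma two_le_pattern11Count_sq {u : List V} (hu : 1 ≤ pattern11Count u) (b c : List V) :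
    2 ≤ pattern11Count (b ++ (u ++ u) ++ c) :=
  calc 2 ≤ pattern11Count u + pattern11Count u := by omega
    _ ≤ pattern11Count (u ++ u) := pattern11Count_add_le_append u u
    _ ≤ pattern11Count (b ++ (u ++ u)) := le_add_self.trans (pattern11Count_add_le_append _ _)
    _ ≤ pattern11Count (b ++ (u ++ u) ++ c) :=
      le_self_add.trans (pattern11Count_add_le_append _ _)

lemma count_eq_count_add_of_pattern11Count_eq_zero {a b : V} (hab : a ≠ b) {l : List V}
    (hl : ∀ c ∈ l, c = a ∨ c = b) (h0 : pattern11Count (a :: l) = 0) :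
    (a :: l).count a = (a :: l).count b + if (a :: l).getLast? = some a then 1 else 0 := by
  induction l generalizing a b with
  | nil => simp [hab]
  | cons c l ih =>
    rw [pattern11Count_cons_cons] at h0
    have hac : a ≠ c := fun h => by simp [h] at h0
    obtain rfl : c = b := (hl c List.mem_cons_self).resolve_left hac.symm
    have ih := ih hab.symm (fun d hd => (hl d (List.mem_cons_of_mem _ hd)).symm) (by omega)
    obtain ⟨d, hd⟩ :=
      Option.isSome_iff_exists.mp (List.getLast?_isSome.mpr (List.cons_ne_nil c l))
    rw [List.getLast?_cons_cons, List.count_cons_self, List.count_cons_of_ne hab, hd]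
    rw [hd] at ih
    rcases hl d (List.mem_of_getLast? hd) with rfl | rfl
    · simp only [Option.some.injEq, if_neg hab, if_true] at ih ⊢
      omega
    · simp only [Option.some.injEq, if_neg hab.symm, if_true] at ih ⊢
      omega

lemma getLast?_ne_of_pattern11Count_eq_zero_of_count_eq {a b : V} (hab : a ≠ b) {l : List V}
    (hl : ∀ c ∈ l, c = a ∨ c = b) (h0 : pattern11Count l = 0) (hcount : l.count a = l.count b)
    {s : V} (hs : l.head? = some s) : l.getLast? ≠ some s := by
  obtain ⟨l, rfl⟩ : ∃ l', l = s :: l' := List.head?_eq_some_iff.mp hs |>.imp fun _ h => h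
  intro hlast
  rcases hl s List.mem_cons_self with rfl | rfl
  · have := count_eq_count_add_of_pattern11Count_eq_zero hab (fun c hc => hl c (.tail _ hc)) h0
    simp only [hlast, if_true] at this
    omega
  · have := count_eq_count_add_of_pattern11Count_eq_zero hab.symm
      (fun c hc => (hl c (.tail _ hc)).symm) h0
    simp only [hlast, if_true] at this
    omega

lemma pattern11Count_intercalate_replicate {a b : V} (hab : a ≠ b) (n : ℕ) :
    pattern11Count ([a].intercalate (.replicate (n + 1) [b])) = 0 ∧
      ([a].intercalate (.replicate (n + 1) [b])).head? = some b ∧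
      ([a].intercalate (.replicate (n + 1) [b])).getLast? = some b := by
  induction n with
  | zero => simp
  | succ n ih =>
    obtain ⟨h0, hhead, hlast⟩ := ih
    obtain ⟨u, hu⟩ : ∃ u, [a].intercalate (.replicate (n + 1) [b]) = b :: u :=
      List.head?_eq_some_iff.mp hhead |>.imp fun _ h => h
    rw [hu] at h0 hlast
    rw [List.replicate_succ, List.intercalate_cons_of_ne_nil (by simp), hu]
    refine ⟨?_, rfl, by simpa using hlast⟩
    simp [pattern11Count_cons_cons, hab, hab.symm, h0]

end Pattern11

lemma IsK11Rep.adj_iff_of_induce {V : Type*} [DecidableEq V] {G : SimpleGraph V} {s : Set V}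
    {k : ℕ} {w : List s} (hw : IsK11Rep (G.induce s) k w) {x y : V} (hx : x ∈ s) (hy : y ∈ s)
    (hxy : x ≠ y) :
    G.Adj x y ↔
      pattern11Count ((w.map Subtype.val).filter fun a => decide (a = x ∨ a = y)) ≤ k := by
  have hP : (fun a => decide (a = x ∨ a = y)) ∘ Subtype.val =
      fun a : s => decide (a = ⟨x, hx⟩ ∨ a = ⟨y, hy⟩) := by
    funext a
    simp [Subtype.ext_iff]
  rw [List.filter_map, hP, pattern11Count_map_of_injective Subtype.val_injective]
  exact hw.2 ⟨x, hx⟩ ⟨y, hy⟩ (by simpa [Subtype.ext_iff] using hxy)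

section Extension

variable {V : Type*}

def extensionWord (B : List V) (v : V) (ps : List (List V)) : List V :=
  B ++ [v].intercalate (ps ++ ps) ++ B.reverse

lemma filter_extensionWord (p : V → Bool) (B : List V) (v : V) (ps : List (List V)) :
    (extensionWord B v ps).filter p =
      B.filter p ++ ([v].filter p).intercalate ((ps ++ ps).map (.filter p)) ++
        (B.filter p).reverse := by
  simp only [extensionWord, List.filter_append, List.filter_reverse, List.filter_intercalate]

lemma filter_extensionWord_of_ne {p : V → Bool} {v : V} (hv : p v = false) (B : List V)
    (ps : List (List V)) :
    (extensionWord B v ps).filter p =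
      B.filter p ++ (ps.flatten.filter p ++ ps.flatten.filter p) ++ (B.filter p).reverse := by
  rw [filter_extensionWord, List.filter_singleton, hv, cond_false, List.nil_intercalate,
    ← List.filter_flatten, List.flatten_append, List.filter_append]

variable [DecidableEq V]

lemma mem_extensionWord {v : V} {ps : List (List V)} (hps : ps ≠ [])
    (hperm : ∀ p ∈ ps, ∀ x, x ≠ v → x ∈ p) (B : List V) (z : V) :
    z ∈ extensionWord B v ps := by
  rcases eq_or_ne z v with rfl | hz
  · obtain ⟨p, qs, rfl⟩ := List.exists_cons_of_ne_nil hps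
    simp [extensionWord, List.intercalate_cons_of_ne_nil]
  · have : z ∈ (extensionWord B v ps).filter (fun a => decide (a = z)) := by
      rw [filter_extensionWord_of_ne (by simpa using hz.symm)]
      obtain ⟨p, hp⟩ := List.exists_mem_of_ne_nil ps hps
      refine List.mem_append_left _ (List.mem_append_right _ (List.mem_append_left _ ?_))
      exact List.mem_filter.mpr ⟨List.mem_flatten.mpr ⟨p, hp, hperm p hp z hz⟩, by simp⟩
    exact List.mem_of_mem_filter this

lemma adj_vertex_iff_pattern11Count_le_one {G : SimpleGraph V} {v : V} {B : List V}
    {ps : List (List V)} (hB : ∀ b, b ∈ B ↔ b ≠ v ∧ ¬ G.Adj v b) (hBnodup : B.Nodup)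
    (hps : ps ≠ []) (hv : ∀ p ∈ ps, v ∉ p) (hperm : ∀ p ∈ ps, ∀ x, x ≠ v → p.count x = 1)
    {x : V} (hx : x ≠ v) :
    G.Adj v x ↔
      pattern11Count ((extensionWord B v ps).filter fun a => decide (a = x ∨ a = v)) ≤ 1 := by
  set P : V → Bool := fun a => decide (a = x ∨ a = v)
  have hPx (l : List V) (hl : v ∉ l) : l.filter P = .replicate (l.count x) x :=
    List.filter_eq_replicate_count fun b hb => by
      simp only [P, decide_eq_true_eq]
      exact or_iff_left fun hbv => hl (hbv ▸ hb)
  have hmid : (ps ++ ps).map (.filter P) = .replicate (ps ++ ps).length [x] := by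
    refine List.eq_replicate_iff.mpr ⟨List.length_map _, ?_⟩
    simp only [List.mem_map, List.mem_append, or_self]
    rintro _ ⟨p, hp, rfl⟩
    rw [hPx p (hv p hp), hperm p hp x hx, List.replicate_one]
  obtain ⟨n, hn⟩ : ∃ n, (ps ++ ps).length = n + 1 :=
    Nat.exists_eq_succ_of_ne_zero (by simpa using hps)
  obtain ⟨h0, hhead, hlast⟩ := pattern11Count_intercalate_replicate hx.symm n
  rw [filter_extensionWord, List.filter_singleton, show P v = true by simp [P], cond_true, hmid,
    hn, hPx B fun h => ((hB v).mp h).1 rfl]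
  by_cases hadj : G.Adj v x
  · have : B.count x = 0 := List.count_eq_zero.mpr fun h => ((hB x).mp h).2 hadj
    simp [this, h0, hadj]
  · have : B.count x = 1 := List.count_eq_one_of_mem hBnodup ((hB x).mpr ⟨hx, hadj⟩)
    rw [this, List.replicate_one, pattern11Count_sandwich (List.nodup_singleton x) rfl hhead, h0,
      hlast]
    simp [hadj]

lemma adj_iff_pattern11Count_le_one_of_ne_vertex {G : SimpleGraph V} {v : V} {B : List V}
    {ps : List (List V)} (hBnodup : B.Nodup) (hps : ps ≠ [])
    (hperm : ∀ p ∈ ps, ∀ x, x ≠ v → p.count x = 1) {x y : V} (hx : x ≠ v) (hy : y ≠ v)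
    (hxy : x ≠ y)
    (hrep : G.Adj x y ↔ pattern11Count (ps.flatten.filter fun a => decide (a = x ∨ a = y)) = 0) :
    G.Adj x y ↔
      pattern11Count ((extensionWord B v ps).filter fun a => decide (a = x ∨ a = y)) ≤ 1 := by
  set P : V → Bool := fun a => decide (a = x ∨ a = y)
  rw [filter_extensionWord_of_ne (by simp [P, hx.symm, hy.symm]), hrep]
  set W := ps.flatten.filter P
  constructor
  · intro h0
    have hcount (z : V) (hz : z ≠ v) (hPz : P z) : W.count z = ps.length := by
      rw [List.count_filter hPz,
        List.count_flatten_of_forall_count_eq_one fun p hp => hperm p hp z hz]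
    obtain ⟨s, hs⟩ : ∃ s, W.head? = some s := by
      refine Option.isSome_iff_exists.mp (List.isSome_head?.mpr fun hW => ?_)
      have := hcount x hx (by simp [P])
      simp only [hW, List.count_nil] at this
      exact hps (List.length_eq_zero_iff.mp this.symm)
    have hW (c : V) (hc : c ∈ W) : c = x ∨ c = y := by simpa [P] using (List.mem_filter.mp hc).2
    refine pattern11Count_sandwich_sq_le_one (hBnodup.filter P) h0 hs ?_
    refine getLast?_ne_of_pattern11Count_eq_zero_of_count_eq hxy hW h0 ?_ hs
    rw [hcount x hx (by simp [P]), hcount y hy (by simp [P])]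
  · intro hle
    by_contra h
    have := two_le_pattern11Count_sq (Nat.one_le_iff_ne_zero.mpr h) (B.filter P)
      (B.filter P).reverse
    omega

theorem isK11Rep_extensionWord {G : SimpleGraph V} {v : V} {B : List V} {ps : List (List V)}
    (hB : ∀ b, b ∈ B ↔ b ≠ v ∧ ¬ G.Adj v b) (hBnodup : B.Nodup) (hps : ps ≠ [])
    (hv : ∀ p ∈ ps, v ∉ p) (hperm : ∀ p ∈ ps, ∀ x, x ≠ v → p.count x = 1)
    (hrep : ∀ x y, x ≠ v → y ≠ v → x ≠ y →
      (G.Adj x y ↔ pattern11Count (ps.flatten.filter fun a => decide (a = x ∨ a = y)) = 0)) :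
    IsK11Rep G 1 (extensionWord B v ps) := by
  have hmem (p) (hp : p ∈ ps) (x) (hx : x ≠ v) : x ∈ p :=
    List.count_pos_iff.mp (by simp [hperm p hp x hx])
  refine ⟨mem_extensionWord hps hmem B, fun x y hxy => ?_⟩
  rcases eq_or_ne x v with rfl | hx
  · simpa only [or_comm] using
      adj_vertex_iff_pattern11Count_le_one hB hBnodup hps hv hperm hxy.symm
  rcases eq_or_ne y v with rfl | hy
  · rw [G.adj_comm]
    exact adj_vertex_iff_pattern11Count_le_one hB hBnodup hps hv hperm hx
  exact adj_iff_pattern11Count_le_one_of_ne_vertex hBnodup hps hperm hx hy hxy (hrep x y hx hy hxy)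

end Extension

/-- if `G \ v` is permutationally representable (it has a 0-11-representant
that is a concatenation of permutations of its vertex set), then `G` is
1-11-representable. -/
theorem k11Representable_of_permRep_deleteVertex {V : Type*} [DecidableEq V] [Fintype V]
    (G : SimpleGraph V) (v : V)
    (h : ∃ w : List {u : V // u ≠ v},
      IsK11Rep (G.induce {u : V | u ≠ v}) 0 w ∧ IsPermConcat {u : V // u ≠ v} w) :
    K11Representable G 1 := by
  classical
  obtain ⟨w, hw, ps, hps, hperm, rfl⟩ := h
  let B := (Finset.univ.filter fun b => b ≠ v ∧ ¬ G.Adj v b).toList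
  refine ⟨extensionWord B v (ps.map (.map Subtype.val)),
    isK11Rep_extensionWord (by simp [B]) (Finset.nodup_toList _) (by simpa using hps) ?_ ?_ ?_⟩
  · simp
  · simp only [List.mem_map]
    rintro _ ⟨p, hp, rfl⟩ x hx
    rw [List.count_map_of_injective _ _ Subtype.val_injective ⟨x, hx⟩]
    -- `count` on the subtype is stated with `instBEqOfDecidableEq`, the rewrite produced
    -- `Subtype.instBEq`
    convert hperm p hp ⟨x, hx⟩ using 2
    exact lawful_beq_subsingleton _ _
  · intro x y hx hy hxy
    rw [← List.map_flatten, hw.adj_iff_of_induce hx hy hxy]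
    exact Nat.le_zero
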